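/- arXiv:2506.21227 — 12 statements merged into one kernel-verified Lean document; each statement's English description precedes it below -/
import Mathlib

section
/- Let Q be an interior system of a poset P. The following are equivalent: (a) for every y ∈ Q, the set ⌈y↓⌉_Q = {a ∈ P | ⌊a⌋_Q ≤ y} is filtered (every pair of elements has an upper bound in the set); (b) Q satisfies both (AL1): ⌈y↓⌉_Q equals the downward closure of ⌈y⌉_Q for all y ∈ Q, and (AL2): ⌈y⌉_Q is filtered for every y ∈ Q. -/
/-- A subset `S` of a poset is filtered if every pair of elements of `S`
has an upper bound in `S`. -/
def IsFilteredSubset {P : Type*} [PartialOrder P] (S : Set P) : Prop :=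
  ∀ a ∈ S, ∀ b ∈ S, ∃ c ∈ S, a ≤ c ∧ b ≤ c

/-- For an interior system `Q` of a poset `P`, the following are equivalent:
(a) `⌈y↓⌉_Q = {a | fl a ≤ y}` is filtered for every `y ∈ Q`;
(b) (AL1) `⌈y↓⌉_Q` equals the downward closure of the fiber `⌈y⌉_Q` for all
`y ∈ Q`, and (AL2) each fiber `⌈y⌉_Q` is filtered. -/
theorem stmt_3 {P : Type*} [PartialOrder P] (Q : Set P) (fl : P → P)
    (hmem : ∀ x : P, fl x ∈ Q) (hle : ∀ x : P, fl x ≤ x)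
    (hmax : ∀ x : P, ∀ y ∈ Q, y ≤ x → y ≤ fl x) :
    (∀ y ∈ Q, IsFilteredSubset {a : P | fl a ≤ y}) ↔
      ((∀ y ∈ Q, {a : P | fl a ≤ y} = {a : P | ∃ t : P, fl t = y ∧ a ≤ t}) ∧
       (∀ y ∈ Q, IsFilteredSubset {a : P | fl a = y})) := by
  have hmono : ∀ a b : P, a ≤ b → fl a ≤ fl b := fun a b h =>
    hmax b (fl a) (hmem a) (le_trans (hle a) h)
  have hfix : ∀ y ∈ Q, fl y = y := fun y hy =>
    le_antisymm (hle y) (hmax y y hy le_rfl)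
  constructor
  · intro H
    constructor
    · intro y hy
      ext a
      constructor
      · intro (ha : fl a ≤ y)
        have hyin : fl y ≤ y := (hfix y hy).le
        obtain ⟨c, hc, hac, hyc⟩ := H y hy a ha y hyin
        refine ⟨c, le_antisymm hc ?_, hac⟩
        exact hmax c y hy hyc
      · rintro ⟨t, ht, hat⟩
        exact le_trans (hmono a t hat) ht.le
    · intro y hy a ha b hb
      obtain ⟨c, hc, hac, hbc⟩ := H y hy a ha.le b hb.le
      refine ⟨c, le_antisymm hc ?_, hac, hbc⟩
      calc y = fl a := ha.symm
        _ ≤ fl c := hmono a c hac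
  · rintro ⟨hAL1, hAL2⟩ y hy a ha b hb
    have ha' : a ∈ {a : P | ∃ t : P, fl t = y ∧ a ≤ t} := (hAL1 y hy) ▸ ha
    have hb' : b ∈ {a : P | ∃ t : P, fl t = y ∧ a ≤ t} := (hAL1 y hy) ▸ hb
    obtain ⟨t, htf, hat⟩ := ha'
    obtain ⟨s, hsf, hbs⟩ := hb'
    obtain ⟨c, hc, htc, hsc⟩ := hAL2 y hy t htf s hsf
    exact ⟨c, hc.le, le_trans hat htc, le_trans hbs hsc⟩
end

section
/- Let Q be an interior system of a poset P satisfying condition (AL1). Then for all x, y ∈ Q with x ≤ y and every a ∈ ⌈x⌉_Q, there exists b ∈ ⌈y⌉_Q with a ≤ b. Conversely, if this lifting property holds for all x ≤ y in Q, then (AL1) holds. -/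
/-- For an interior system `Q` of a poset `P`, condition (AL1)
(`⌈y↓⌉_Q` equals the downward closure of `⌈y⌉_Q` for all `y ∈ Q`)
holds if and only if the lifting property holds: for all `x ≤ y` in `Q`
and every `a` with `fl a = x` there is `b` with `fl b = y` and `a ≤ b`. -/
theorem stmt_4 {P : Type*} [PartialOrder P] (Q : Set P) (fl : P → P)
    (hmem : ∀ x : P, fl x ∈ Q) (hle : ∀ x : P, fl x ≤ x)
    (hmax : ∀ x : P, ∀ y ∈ Q, y ≤ x → y ≤ fl x) :
    (∀ y ∈ Q, {a : P | fl a ≤ y} = {a : P | ∃ t : P, fl t = y ∧ a ≤ t}) ↔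
      (∀ x ∈ Q, ∀ y ∈ Q, x ≤ y →
        ∀ a : P, fl a = x → ∃ b : P, fl b = y ∧ a ≤ b) := by
  constructor
  · intro h x hx y hy hxy a ha
    have : a ∈ {a : P | fl a ≤ y} := by simp [ha, hxy]
    rw [h y hy] at this
    exact this
  · intro h y hy
    ext a
    constructor
    · intro ha
      exact h (fl a) (hmem a) y hy ha a rfl
    · rintro ⟨t, ht, hat⟩
      have : fl a ≤ fl t := hmax t (fl a) (hmem a) (le_trans (hle a) hat)
      simpa [ht] using this
end

section
/- Let Q be an interior system of a poset P, and let S ⊆ Q. Then S is convex in Q if and only if the preimage ⌈S⌉_Q = {a ∈ P | ⌊a⌋_Q ∈ S} is convex in P. -/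
/-- For an interior system `Q` of a poset `P` and `S ⊆ Q`,
`S` is convex in `Q` iff `⌈S⌉_Q = {a | fl a ∈ S}` is convex in `P`. -/
theorem stmt_5 {P : Type*} [PartialOrder P] (Q : Set P) (fl : P → P)
    (hmem : ∀ x : P, fl x ∈ Q) (hle : ∀ x : P, fl x ≤ x)
    (hmax : ∀ x : P, ∀ y ∈ Q, y ≤ x → y ≤ fl x)
    (S : Set P) (hS : S ⊆ Q) :
    (∀ x ∈ S, ∀ y ∈ S, ∀ z ∈ Q, x ≤ z → z ≤ y → z ∈ S) ↔
      (∀ x ∈ {a : P | fl a ∈ S}, ∀ y ∈ {a : P | fl a ∈ S}, ∀ z : P,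
        x ≤ z → z ≤ y → z ∈ {a : P | fl a ∈ S}) := by
  have hfix : ∀ q ∈ Q, fl q = q := fun q hq =>
    le_antisymm (hle q) (hmax q q hq le_rfl)
  constructor
  · intro h x hx y hy z hxz hzy
    exact h (fl x) hx (fl y) hy (fl z) (hmem z)
      (hmax z (fl x) (hmem x) ((hle x).trans hxz))
      (hmax y (fl z) (hmem z) ((hle z).trans hzy))
  · intro h x hx y hy z hz hxz hzy
    have hxm : x ∈ {a : P | fl a ∈ S} := by simp [Set.mem_setOf_eq, hfix x (hS hx), hx]
    have hym : y ∈ {a : P | fl a ∈ S} := by simp [Set.mem_setOf_eq, hfix y (hS hy), hy]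
    have := h x hxm y hym z hxz hzy
    rwa [Set.mem_setOf_eq, hfix z hz] at this
end

section
/- Let Q be an interior system of a poset P, and let S ⊆ Q. Then S is connected in Q if and only if ⌈S⌉_Q = {a ∈ P | ⌊a⌋_Q ∈ S} is connected in P. -/
/-- Zigzag connectivity inside a subset `S` of a poset: `x` and `y` are joined
by a finite sequence of elements of `S` in which consecutive elements are
comparable. -/
def ZigzagIn {P : Type*} [PartialOrder P] (S : Set P) (x y : P) : Prop :=
  Relation.ReflTransGen (fun a b => a ∈ S ∧ b ∈ S ∧ (a ≤ b ∨ b ≤ a)) x y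

/-- A subset `S` of a poset is connected if any two of its elements are joined
by a zigzag of comparabilities within `S`. -/
def IsConnectedSubset {P : Type*} [PartialOrder P] (S : Set P) : Prop :=
  ∀ x ∈ S, ∀ y ∈ S, ZigzagIn S x y

/-- For an interior system `Q` of a poset `P` and `S ⊆ Q`, `S` is connected
in `Q` iff `⌈S⌉_Q = {a | fl a ∈ S}` is connected in `P`. -/
theorem stmt_6 {P : Type*} [PartialOrder P] (Q : Set P) (fl : P → P)
    (hmem : ∀ x : P, fl x ∈ Q) (hle : ∀ x : P, fl x ≤ x)
    (hmax : ∀ x : P, ∀ y ∈ Q, y ≤ x → y ≤ fl x)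
    (S : Set P) (hS : S ⊆ Q) :
    IsConnectedSubset S ↔ IsConnectedSubset {a : P | fl a ∈ S} := by
  have hfix : ∀ q ∈ Q, fl q = q := fun q hq =>
    le_antisymm (hle q) (hmax q q hq le_rfl)
  have hmono : ∀ a b : P, a ≤ b → fl a ≤ fl b := fun a b hab =>
    hmax b (fl a) (hmem a) ((hle a).trans hab)
  have hsub : S ⊆ {a : P | fl a ∈ S} := fun s hs => by
    simp only [Set.mem_setOf_eq, hfix s (hS hs)]; exact hs
  constructor
  · intro h a ha b hb
    have h1 : ZigzagIn {a : P | fl a ∈ S} a (fl a) :=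
      Relation.ReflTransGen.single ⟨ha, hsub ha, Or.inr (hle a)⟩
    have h3 : ZigzagIn {a : P | fl a ∈ S} (fl b) b :=
      Relation.ReflTransGen.single ⟨hsub hb, hb, Or.inl (hle b)⟩
    have h2 : ZigzagIn {a : P | fl a ∈ S} (fl a) (fl b) :=
      Relation.ReflTransGen.mono (fun x y ⟨hx, hy, hc⟩ => ⟨hsub hx, hsub hy, hc⟩) _ _ (h (fl a) ha (fl b) hb)
    exact (h1.trans h2).trans h3
  · intro h x hx y hy
    have hz := h x (hsub hx) y (hsub hy)
    have key : ZigzagIn S (fl x) (fl y) := by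
      refine Relation.ReflTransGen.lift fl ?_ _ _ hz
      rintro a b ⟨ha, hb, hc⟩
      exact ⟨ha, hb, hc.imp (hmono a b) (hmono b a)⟩
    rwa [hfix x (hS hx), hfix y (hS hy)] at key
end

section
/- Let Q be an interior system of a poset P, and let S ⊆ Q. Then S is an interval (convex and connected) in Q if and only if ⌈S⌉_Q is an interval in P. -/
/-- `S` is an interval of the poset `R` (a subset of the ambient poset) if it
is convex in `R` and connected. -/
def IsIntervalIn {P : Type*} [PartialOrder P] (R S : Set P) : Prop :=
  (∀ x ∈ S, ∀ y ∈ S, ∀ z ∈ R, x ≤ z → z ≤ y → z ∈ S) ∧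
  (∀ x ∈ S, ∀ y ∈ S, ZigzagIn S x y)

/-- For an interior system `Q` of a poset `P` and `S ⊆ Q`, `S` is an interval
of `Q` iff `⌈S⌉_Q = {a | fl a ∈ S}` is an interval of `P`. -/
theorem stmt_7 {P : Type*} [PartialOrder P] (Q : Set P) (fl : P → P)
    (hmem : ∀ x : P, fl x ∈ Q) (hle : ∀ x : P, fl x ≤ x)
    (hmax : ∀ x : P, ∀ y ∈ Q, y ≤ x → y ≤ fl x)
    (S : Set P) (hS : S ⊆ Q) :
    IsIntervalIn Q S ↔ IsIntervalIn Set.univ {a : P | fl a ∈ S} := by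
  have hfix : ∀ q ∈ Q, fl q = q := fun q hq => le_antisymm (hle q) (hmax q q hq le_rfl)
  have hmono : ∀ {x y : P}, x ≤ y → fl x ≤ fl y := fun {x y} h =>
    hmax y (fl x) (hmem x) ((hle x).trans h)
  have hST : S ⊆ {a : P | fl a ∈ S} := fun s hs => by
    simp only [Set.mem_setOf_eq, hfix s (hS hs)]; exact hs
  constructor
  · rintro ⟨hconv, hconn⟩
    constructor
    · intro x hx y hy z _ hxz hzy
      exact hconv _ hx _ hy _ (hmem z) (hmono hxz) (hmono hzy)
    · intro x hx y hy
      have hfx : fl x ∈ {a : P | fl a ∈ S} := hST hx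
      have hfy : fl y ∈ {a : P | fl a ∈ S} := hST hy
      have hx' : x ∈ {a : P | fl a ∈ S} := hx
      have hy' : y ∈ {a : P | fl a ∈ S} := hy
      have step1 : ZigzagIn {a : P | fl a ∈ S} x (fl x) :=
        Relation.ReflTransGen.single ⟨hx', hfx, Or.inr (hle x)⟩
      have step3 : ZigzagIn {a : P | fl a ∈ S} (fl y) y :=
        Relation.ReflTransGen.single ⟨hfy, hy', Or.inl (hle y)⟩
      have step2 : ZigzagIn {a : P | fl a ∈ S} (fl x) (fl y) :=
        Relation.ReflTransGen.mono
          (fun a b hab => ⟨hST hab.1, hST hab.2.1, hab.2.2⟩) _ _ (hconn _ hx _ hy)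
      exact (step1.trans step2).trans step3
  · rintro ⟨hconv, hconn⟩
    constructor
    · intro x hx y hy z hzQ hxz hzy
      have hz : z ∈ {a : P | fl a ∈ S} :=
        hconv x (hST hx) y (hST hy) z (Set.mem_univ z) hxz hzy
      have : fl z ∈ S := hz
      rwa [hfix z hzQ] at this
    · intro x hx y hy
      have key : ∀ a b : P, ZigzagIn {c : P | fl c ∈ S} a b → ZigzagIn S (fl a) (fl b) := by
        intro a b h
        induction h with
        | refl => exact Relation.ReflTransGen.refl
        | tail _ hstep ih =>
            exact ih.tail ⟨hstep.1, hstep.2.1,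
              hstep.2.2.elim (fun h => Or.inl (hmono h)) (fun h => Or.inr (hmono h))⟩
      have := key x y (hconn x (hST hx) y (hST hy))
      rwa [hfix x (hS hx), hfix y (hS hy)] at this
end

section
/- Let Q be an aligned interior system of a poset P and T ⊆ P an interval. Define T̄^Q = {x ∈ Q | T ∩ ⌈x⌉_Q is non-empty and is an upset of ⌈x⌉_Q}. Then T̄^Q is convex in Q. -/
/-- For an aligned interior system `Q` of a poset `P` and an interval `T ⊆ P`,
the set `T̄^Q = {x ∈ Q | T ∩ ⌈x⌉_Q is non-empty and an upset of ⌈x⌉_Q}` is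
convex in `Q`. -/
theorem stmt_8 {P : Type*} [PartialOrder P] (Q : Set P) (fl : P → P)
    (hmem : ∀ x : P, fl x ∈ Q) (hle : ∀ x : P, fl x ≤ x)
    (hmax : ∀ x : P, ∀ y ∈ Q, y ≤ x → y ≤ fl x)
    (haligned : ∀ y ∈ Q, ∀ a ∈ {a : P | fl a ≤ y}, ∀ b ∈ {a : P | fl a ≤ y},
      ∃ c ∈ {a : P | fl a ≤ y}, a ≤ c ∧ b ≤ c)
    (T : Set P)
    (hTconv : ∀ x ∈ T, ∀ y ∈ T, ∀ z : P, x ≤ z → z ≤ y → z ∈ T)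
    (hTconn : ∀ x ∈ T, ∀ y ∈ T, ZigzagIn T x y) :
    ∀ x ∈ {x : P | x ∈ Q ∧ (T ∩ {a : P | fl a = x}).Nonempty ∧
        (∀ a ∈ T ∩ {a : P | fl a = x}, ∀ b ∈ {a : P | fl a = x}, a ≤ b → b ∈ T)},
      ∀ y ∈ {x : P | x ∈ Q ∧ (T ∩ {a : P | fl a = x}).Nonempty ∧
        (∀ a ∈ T ∩ {a : P | fl a = x}, ∀ b ∈ {a : P | fl a = x}, a ≤ b → b ∈ T)},
      ∀ z ∈ Q, x ≤ z → z ≤ y →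
        z ∈ {x : P | x ∈ Q ∧ (T ∩ {a : P | fl a = x}).Nonempty ∧
          (∀ a ∈ T ∩ {a : P | fl a = x}, ∀ b ∈ {a : P | fl a = x}, a ≤ b → b ∈ T)} := by
  rintro x ⟨hxQ, ⟨a, haT, hax⟩, hxup⟩ y ⟨hyQ, ⟨b, hbT, hby⟩, hyup⟩ z hzQ hxz hzy
  -- fl fixes elements of Q
  have hflz : fl z = z := le_antisymm (hle z) (hmax z z hzQ le_rfl)
  -- key: any v with fl v ≤ y and v ∈ T-upper-reachable... we show:
  -- for any v with fl v ≤ y, there is c ∈ T with v ≤ c.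
  have key : ∀ v : P, fl v ≤ y → ∃ c ∈ T, v ≤ c := by
    intro v hv
    obtain ⟨c, hc, hvc, hbc⟩ := haligned y hyQ v hv b (le_of_eq hby)
    have hyc : y ≤ fl c := by
      have : fl b ≤ fl c := hmax c (fl b) (hmem b) (le_trans (hle b) hbc)
      rwa [hby] at this
    have hcy : fl c = y := le_antisymm hc hyc
    exact ⟨c, hyup b ⟨hbT, hby⟩ c hcy hbc, hvc⟩
  refine ⟨hzQ, ?_, ?_⟩
  · -- nonempty: find w ≥ a, w ≥ z with fl w = z
    obtain ⟨w, hw, haw, hzw⟩ := haligned z hzQ a (show fl a ≤ z by rw [hax]; exact hxz) z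
      (by simp [hflz])
    have hwz : fl w = z := le_antisymm hw (hmax w z hzQ hzw)
    obtain ⟨c, hcT, hwc⟩ := key w (hwz ▸ hzy)
    exact ⟨w, hTconv a haT c hcT w haw hwc, hwz⟩
  · rintro a' ⟨ha'T, ha'z⟩ b' hb'z hab
    obtain ⟨c, hcT, hbc⟩ := key b' (hb'z ▸ hzy)
    exact hTconv a' ha'T c hcT b' hab hbc
end

section
/- Let Q be an aligned interior system of a poset P, T ⊆ P an interval, and x ∈ Q. Then x ∈ T̄^Q (i.e., T ∩ ⌈x⌉_Q is non-empty and an upset of ⌈x⌉_Q) if and only if every r ∈ ⌈x⌉_Q admits p ∈ T ∩ ⌈x⌉_Q with r ≤ p. -/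
/-- For an aligned interior system `Q` of `P`, an interval `T ⊆ P` and `x ∈ Q`:
`T ∩ ⌈x⌉_Q` is non-empty and an upset of `⌈x⌉_Q` iff every `r ∈ ⌈x⌉_Q` admits
`p ∈ T ∩ ⌈x⌉_Q` with `r ≤ p`. -/
theorem stmt_9 {P : Type*} [PartialOrder P] (Q : Set P) (fl : P → P)
    (hmem : ∀ x : P, fl x ∈ Q) (hle : ∀ x : P, fl x ≤ x)
    (hmax : ∀ x : P, ∀ y ∈ Q, y ≤ x → y ≤ fl x)
    (haligned : ∀ y ∈ Q, ∀ a ∈ {a : P | fl a ≤ y}, ∀ b ∈ {a : P | fl a ≤ y},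
      ∃ c ∈ {a : P | fl a ≤ y}, a ≤ c ∧ b ≤ c)
    (T : Set P)
    (hTconv : ∀ x ∈ T, ∀ y ∈ T, ∀ z : P, x ≤ z → z ≤ y → z ∈ T)
    (hTconn : ∀ x ∈ T, ∀ y ∈ T, ZigzagIn T x y)
    (x : P) (hx : x ∈ Q) :
    ((T ∩ {a : P | fl a = x}).Nonempty ∧
      (∀ a ∈ T ∩ {a : P | fl a = x}, ∀ b ∈ {a : P | fl a = x}, a ≤ b → b ∈ T)) ↔
    (∀ r ∈ {a : P | fl a = x}, ∃ p ∈ T ∩ {a : P | fl a = x}, r ≤ p) := by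
  have hflx : fl x = x := le_antisymm (hle x) (hmax x x hx le_rfl)
  constructor
  · rintro ⟨⟨a, haT, hafl⟩, hup⟩ r hr
    obtain ⟨c, hc, hac, hrc⟩ := haligned x hx a (le_of_eq hafl) r (le_of_eq hr)
    have hfc : fl c = x := by
      have : x ≤ fl c := hafl ▸ hmax c (fl a) (hmem a) ((hle a).trans hac)
      exact le_antisymm hc this
    exact ⟨c, ⟨hup a ⟨haT, hafl⟩ c hfc hac, hfc⟩, hrc⟩
  · intro h
    obtain ⟨p, hp, _⟩ := h x hflx
    refine ⟨⟨p, hp⟩, ?_⟩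
    rintro a ⟨haT, hafl⟩ b hb hab
    obtain ⟨q, ⟨hqT, _⟩, hbq⟩ := h b hb
    exact hTconv a haT q hqT b hab hbq
end

section
/- Let Q be an aligned interior system of a poset P, and T ⊆ P an interval that is an upset of P. Then T̄^Q = ⌊T⌋_Q (the image of T under the floor function), and this set is an upset of Q. -/
/-- For an aligned interior system `Q` of `P` and an interval `T ⊆ P` which is
an upset of `P`, one has `T̄^Q = ⌊T⌋_Q` (the image of `T` under the floor
function), and this set is an upset of `Q`. -/
theorem stmt_10 {P : Type*} [PartialOrder P] (Q : Set P) (fl : P → P)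
    (hmem : ∀ x : P, fl x ∈ Q) (hle : ∀ x : P, fl x ≤ x)
    (hmax : ∀ x : P, ∀ y ∈ Q, y ≤ x → y ≤ fl x)
    (haligned : ∀ y ∈ Q, ∀ a ∈ {a : P | fl a ≤ y}, ∀ b ∈ {a : P | fl a ≤ y},
      ∃ c ∈ {a : P | fl a ≤ y}, a ≤ c ∧ b ≤ c)
    (T : Set P)
    (hTconv : ∀ x ∈ T, ∀ y ∈ T, ∀ z : P, x ≤ z → z ≤ y → z ∈ T)
    (hTconn : ∀ x ∈ T, ∀ y ∈ T, ZigzagIn T x y)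
    (hTup : ∀ u ∈ T, ∀ r : P, u ≤ r → r ∈ T) :
    {x : P | x ∈ Q ∧ (T ∩ {a : P | fl a = x}).Nonempty ∧
        (∀ a ∈ T ∩ {a : P | fl a = x}, ∀ b ∈ {a : P | fl a = x}, a ≤ b → b ∈ T)}
      = fl '' T ∧
    (∀ x ∈ fl '' T, ∀ y ∈ Q, x ≤ y → y ∈ fl '' T) := by
  have hfix : ∀ y ∈ Q, fl y = y := fun y hy =>
    le_antisymm (hle y) (hmax y y hy le_rfl)
  constructor
  · ext x
    constructor
    · rintro ⟨hxQ, ⟨a, haT, hfa⟩, -⟩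
      exact ⟨a, haT, hfa⟩
    · rintro ⟨a, haT, rfl⟩
      refine ⟨hmem a, ⟨a, haT, rfl⟩, ?_⟩
      rintro b ⟨hbT, -⟩ c - hbc
      exact hTup b hbT c hbc
  · rintro x ⟨a, haT, rfl⟩ y hyQ hxy
    obtain ⟨c, hc, hac, hyc⟩ := haligned y hyQ a hxy y (le_of_eq (hfix y hyQ))
    exact ⟨c, hTup a haT c hac, le_antisymm hc (hmax c y hyQ hyc)⟩
end

section
/- Let Q be an aligned interior system of a poset P, and T ⊆ P an interval having a minimum element a. If T̄^Q is non-empty, then ⌊a⌋_Q is the minimum element of T̄^Q. -/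
/-- For an aligned interior system `Q` of `P` and an interval `T ⊆ P` with
minimum element `a`: if `T̄^Q` is non-empty then `⌊a⌋_Q` is its minimum. -/
theorem stmt_11 {P : Type*} [PartialOrder P] (Q : Set P) (fl : P → P)
    (hmem : ∀ x : P, fl x ∈ Q) (hle : ∀ x : P, fl x ≤ x)
    (hmax : ∀ x : P, ∀ y ∈ Q, y ≤ x → y ≤ fl x)
    (haligned : ∀ y ∈ Q, ∀ a ∈ {a : P | fl a ≤ y}, ∀ b ∈ {a : P | fl a ≤ y},
      ∃ c ∈ {a : P | fl a ≤ y}, a ≤ c ∧ b ≤ c)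
    (T : Set P)
    (hTconv : ∀ x ∈ T, ∀ y ∈ T, ∀ z : P, x ≤ z → z ≤ y → z ∈ T)
    (hTconn : ∀ x ∈ T, ∀ y ∈ T, ZigzagIn T x y)
    (a : P) (ha : IsLeast T a)
    (hne : {x : P | x ∈ Q ∧ (T ∩ {b : P | fl b = x}).Nonempty ∧
      (∀ b ∈ T ∩ {b : P | fl b = x}, ∀ c ∈ {b : P | fl b = x}, b ≤ c → c ∈ T)}.Nonempty) :
    IsLeast {x : P | x ∈ Q ∧ (T ∩ {b : P | fl b = x}).Nonempty ∧
      (∀ b ∈ T ∩ {b : P | fl b = x}, ∀ c ∈ {b : P | fl b = x}, b ≤ c → c ∈ T)}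
      (fl a) := by
  have hmono : ∀ u v : P, u ≤ v → fl u ≤ fl v := fun u v h =>
    hmax v (fl u) (hmem u) (le_trans (hle u) h)
  obtain ⟨x, hxQ, ⟨t, htT, htf⟩, hxup⟩ := hne
  have hflax : fl a ≤ x := htf ▸ hmono a t (ha.2 htT)
  constructor
  · refine ⟨hmem a, ⟨a, ha.1, rfl⟩, ?_⟩
    intro b hb c hc hbc
    obtain ⟨d, hd, hcd, htd⟩ := haligned x hxQ c (show fl c ≤ x by rw [show fl c = fl a from hc]; exact hflax)
      t (le_of_eq htf)
    have hfd : fl d = x := le_antisymm hd (htf ▸ hmono t d htd)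
    have hdT : d ∈ T := hxup t ⟨htT, htf⟩ d hfd htd
    exact hTconv b hb.1 d hdT c hbc hcd
  · rintro y ⟨hyQ, ⟨s, hsT, hsf⟩, -⟩
    exact hsf ▸ hmono a s (ha.2 hsT)
end

section
/- Let P be a poset and S ⊆ P a non-empty interval that is an upset of P. Then the colimit of the interval module 𝕀_S (as a functor P → Vect_k) is one-dimensional, and the canonical map colim (𝕀_S restricted to S) → colim 𝕀_S is an isomorphism. If S is an interval that is not an upset of P (or empty), then colim 𝕀_S = 0. -/
open CategoryTheory Limits Classical in
/-- The interval module `𝕀_S : P ⥤ Vect_k` of a convex subset `S ⊆ P`: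
it assigns `k` to points of `S` (realized as functions `PLift (x ∈ S) → k`)
and `0` elsewhere, with identity maps between points of `S` and zero maps
otherwise. -/
noncomputable def intervalModule (k : Type) [Field k] {P : Type} [PartialOrder P]
    (S : Set P)
    (hconv : ∀ ⦃x y z : P⦄, x ∈ S → z ∈ S → x ≤ y → y ≤ z → y ∈ S) :
    P ⥤ ModuleCat.{0} k where
  obj x := ModuleCat.of k (PLift (x ∈ S) → k)
  map {x y} h := ModuleCat.ofHom <|
    { toFun := fun f _hy => if hx : x ∈ S then f ⟨hx⟩ else 0
      map_add' := by
        intro f g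
        funext hy
        by_cases hx : x ∈ S
        · simp only [dif_pos hx]; rfl
        · simp only [dif_neg hx]
          show (0 : k) = 0 + 0
          rw [add_zero]
      map_smul' := by
        intro c f
        funext hy
        by_cases hx : x ∈ S
        · simp only [dif_pos hx]; rfl
        · simp only [dif_neg hx]
          show (0 : k) = c • 0
          rw [smul_zero] }
  map_id x := by
    apply ModuleCat.hom_ext
    apply LinearMap.ext
    intro f
    funext hx
    simp only [ModuleCat.hom_ofHom, ModuleCat.hom_comp, ModuleCat.hom_id, LinearMap.comp_apply, LinearMap.id_apply, LinearMap.coe_mk, AddHom.coe_mk]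
    simp only [dif_pos hx.down]
  map_comp {x y z} hxy hyz := by
    apply ModuleCat.hom_ext
    apply LinearMap.ext
    intro f
    funext hz
    simp only [ModuleCat.hom_ofHom, ModuleCat.hom_comp, ModuleCat.hom_id, LinearMap.comp_apply, LinearMap.id_apply, LinearMap.coe_mk, AddHom.coe_mk]
    by_cases hx : x ∈ S
    · have hy : y ∈ S := hconv hx hz.down (leOfHom hxy) (leOfHom hyz)
      simp only [dif_pos hx, dif_pos hy]
    · by_cases hy : y ∈ S
      · simp only [dif_neg hx, dif_pos hy]
      · simp only [dif_neg hx, dif_neg hy]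

namespace IMaux
set_option linter.unusedSectionVars false

open CategoryTheory Limits Classical

variable (k : Type) [Field k] {P : Type} [PartialOrder P] (S : Set P)
  (hconv : ∀ ⦃x y z : P⦄, x ∈ S → z ∈ S → x ≤ y → y ≤ z → y ∈ S)

lemma map_const {x y : P} (h : x ⟶ y) (hx : x ∈ S) (c : k) :
    (intervalModule k S hconv).map h (fun _ => c) = fun _ => c := by
  funext hy
  exact (dif_pos hx : (if hx : x ∈ S then c else 0) = c)

lemma map_zero_tgt {x y : P} (h : x ⟶ y) (hy : y ∉ S) (f : PLift (x ∈ S) → k) :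
    (intervalModule k S hconv).map h f = (0 : PLift (y ∈ S) → k) := by
  funext p
  exact absurd p.down hy

lemma src_eq_const {x : P} (hx : x ∈ S) (f : PLift (x ∈ S) → k) :
    f = fun _ => f ⟨hx⟩ := by
  funext p
  congr

lemma src_eq_zero {x : P} (hx : x ∉ S) (f : PLift (x ∈ S) → k) :
    f = 0 := by
  funext p
  exact absurd p.down hx

lemma step_const (t : Cocone (intervalModule k S hconv)) (c : k)
    {a b : P} (ha : a ∈ S) (hle : a ≤ b) :
    t.ι.app a (fun _ => c) = t.ι.app b (fun _ => c) := by
  have hw := t.w (homOfLE hle)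
  rw [← hw]
  show t.ι.app b ((intervalModule k S hconv).map (homOfLE hle) (fun _ => c)) = _
  rw [map_const k S hconv _ ha]

lemma chain_const (t : Cocone (intervalModule k S hconv)) (c : k)
    {x y : P}
    (h : Relation.ReflTransGen (fun a b => a ∈ S ∧ b ∈ S ∧ (a ≤ b ∨ b ≤ a)) x y) :
    t.ι.app x (fun _ => c) = t.ι.app y (fun _ => c) := by
  induction h with
  | refl => rfl
  | tail _ step ih =>
    obtain ⟨hb, hy, hle | hle⟩ := step
    · rw [ih, step_const k S hconv t c hb hle]
    · rw [ih, step_const k S hconv t c hy hle]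

open Classical in
noncomputable def upCocone
    (hup : ∀ u ∈ S, ∀ r : P, u ≤ r → r ∈ S) :
    Cocone (intervalModule k S hconv) where
  pt := ModuleCat.of k k
  ι :=
    { app := fun x => ModuleCat.ofHom
        { toFun := fun f => if hx : x ∈ S then f ⟨hx⟩ else 0
          map_add' := by
            intro f g
            by_cases hx : x ∈ S
            · simp only [dif_pos hx]; rfl
            · simp only [dif_neg hx]; rw [add_zero]
          map_smul' := by
            intro c f
            by_cases hx : x ∈ S
            · simp only [dif_pos hx]; rfl
            · simp only [dif_neg hx]; rw [smul_zero] }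
      naturality := by
        intro x y h
        apply ModuleCat.hom_ext
        apply LinearMap.ext
        intro f
        show (if hy : y ∈ S then (intervalModule k S hconv).map h f ⟨hy⟩ else 0)
            = (if hx : x ∈ S then f ⟨hx⟩ else 0)
        by_cases hx : x ∈ S
        · have hy : y ∈ S := hup x hx y (leOfHom h)
          rw [dif_pos hx, dif_pos hy]
          exact dif_pos hx
        · rw [dif_neg hx]
          by_cases hy : y ∈ S
          · rw [dif_pos hy]
            exact dif_neg hx
          · rw [dif_neg hy] }

noncomputable def upIsColimit
    (hconn : ∀ x ∈ S, ∀ y ∈ S,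
      Relation.ReflTransGen (fun a b => a ∈ S ∧ b ∈ S ∧ (a ≤ b ∨ b ≤ a)) x y)
    (x₀ : P) (hx₀ : x₀ ∈ S)
    (hup : ∀ u ∈ S, ∀ r : P, u ≤ r → r ∈ S) :
    IsColimit (upCocone k S hconv hup) where
  desc t := ModuleCat.ofHom
    { toFun := fun c => t.ι.app x₀ (fun _ => c)
      map_add' := by
        intro a b
        show t.ι.app x₀ (fun _ => a + b) = t.ι.app x₀ (fun _ => a) + t.ι.app x₀ (fun _ => b)
        have : (fun (_ : PLift (x₀ ∈ S)) => a + b)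
            = (fun _ => a) + (fun _ => b) := rfl
        exact map_add (t.ι.app x₀).hom (fun _ => a) (fun _ => b)
      map_smul' := by
        intro c a
        show t.ι.app x₀ (fun _ => c • a) = c • t.ι.app x₀ (fun _ => a)
        have : (fun (_ : PLift (x₀ ∈ S)) => c • a)
            = c • (fun _ => a) := rfl
        exact map_smul (t.ι.app x₀).hom c (fun _ => a) }
  fac := by
    intro t x
    apply ModuleCat.hom_ext
    apply LinearMap.ext
    intro f
    show t.ι.app x₀ (fun _ => if hx : x ∈ S then f ⟨hx⟩ else 0) = t.ι.app x f
    by_cases hx : x ∈ S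
    · simp only [dif_pos hx]
      exact (chain_const k S hconv t (f ⟨hx⟩) (hconn x₀ hx₀ x hx)).trans
        (congrArg (t.ι.app x) (src_eq_const k S hx f).symm)
    · simp only [dif_neg hx]
      rw [src_eq_zero k S hx f]
      have : (fun (_ : PLift (x₀ ∈ S)) => (0:k)) = 0 := rfl
      exact (map_zero (t.ι.app x₀).hom).trans (map_zero (t.ι.app x).hom).symm
  uniq := by
    intro t m hm
    apply ModuleCat.hom_ext
    apply LinearMap.ext
    intro c
    have h1 : ((upCocone k S hconv hup).ι.app x₀ ≫ m) (fun _ => c) = t.ι.app x₀ (fun _ => c) :=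
      ConcreteCategory.congr_hom (hm x₀) (fun _ => c)
    have h2 : ((upCocone k S hconv hup).ι.app x₀ ≫ m) (fun (_ : PLift (x₀ ∈ S)) => c) = m c := by
      show m (if hx : x₀ ∈ S then c else 0) = m c
      rw [dif_pos hx₀]
    show m c = t.ι.app x₀ (fun _ => c)
    exact h2.symm.trans h1

end IMaux

namespace IMaux

open CategoryTheory Limits Classical

section
variable (k : Type) [Field k] {P : Type} [PartialOrder P] (S : Set P)
  (hconv : ∀ ⦃x y z : P⦄, x ∈ S → z ∈ S → x ≤ y → y ≤ z → y ∈ S)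

abbrev incl : ↥S ⥤ P := Monotone.functor (f := (Subtype.val : S → P)) (fun _ _ h => h)

set_option linter.unusedSectionVars false

lemma step_const' (t : Cocone (incl S ⋙ intervalModule k S hconv)) (c : k)
    (a b : S) (hle : a.val ≤ b.val) :
    t.ι.app a (fun _ => c) = t.ι.app b (fun _ => c) := by
  have hw := t.w (homOfLE (show a ≤ b from hle))
  rw [← hw]
  show t.ι.app b ((incl S ⋙ intervalModule k S hconv).map (homOfLE (show a ≤ b from hle))
    (fun _ => c)) = t.ι.app b (fun _ => c)
  have : (incl S ⋙ intervalModule k S hconv).map (homOfLE (show a ≤ b from hle))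
      (fun _ => c) = fun _ => c := funext fun _ => (dif_pos a.2 : (if h : a.val ∈ S then c else 0) = c)
  rw [this]

lemma chain_const' (t : Cocone (incl S ⋙ intervalModule k S hconv)) (c : k)
    {x y : P} (hx : x ∈ S)
    (h : Relation.ReflTransGen (fun a b => a ∈ S ∧ b ∈ S ∧ (a ≤ b ∨ b ≤ a)) x y) :
    ∀ hy : y ∈ S, t.ι.app ⟨x, hx⟩ (fun _ => c) = t.ι.app ⟨y, hy⟩ (fun _ => c) := by
  induction h with
  | refl => intro _; rfl
  | tail _ step ih =>
    intro hy
    obtain ⟨hb, _hy, hle | hle⟩ := step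
    · rw [ih hb]
      exact step_const' k S hconv t c ⟨_, hb⟩ ⟨_, hy⟩ hle
    · rw [ih hb]
      exact (step_const' k S hconv t c ⟨_, hy⟩ ⟨_, hb⟩ hle).symm

noncomputable def wIsColimit
    (hconn : ∀ x ∈ S, ∀ y ∈ S,
      Relation.ReflTransGen (fun a b => a ∈ S ∧ b ∈ S ∧ (a ≤ b ∨ b ≤ a)) x y)
    (x₀ : P) (hx₀ : x₀ ∈ S)
    (hup : ∀ u ∈ S, ∀ r : P, u ≤ r → r ∈ S) :
    IsColimit ((upCocone k S hconv hup).whisker (incl S)) where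
  desc t := ModuleCat.ofHom
    { toFun := fun c => t.ι.app ⟨x₀, hx₀⟩ (fun _ => c)
      map_add' := fun a b => map_add (t.ι.app ⟨x₀, hx₀⟩).hom (fun _ => a) (fun _ => b)
      map_smul' := fun c a => map_smul (t.ι.app ⟨x₀, hx₀⟩).hom c (fun _ => a) }
  fac := by
    intro t s
    apply ModuleCat.hom_ext
    apply LinearMap.ext
    intro f
    show t.ι.app ⟨x₀, hx₀⟩ (fun _ => if hx : s.val ∈ S then f ⟨hx⟩ else 0) = t.ι.app s f
    have hs : s.val ∈ S := s.2
    simp only [dif_pos hs]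
    have h1 := chain_const' k S hconv t (f ⟨hs⟩) hx₀ (hconn x₀ hx₀ s.val hs) hs
    rw [h1]
  uniq := by
    intro t m hm
    apply ModuleCat.hom_ext
    apply LinearMap.ext
    intro c
    have h1 : (((upCocone k S hconv hup).whisker (incl S)).ι.app ⟨x₀, hx₀⟩ ≫ m) (fun _ => c)
        = t.ι.app ⟨x₀, hx₀⟩ (fun _ => c) :=
      ConcreteCategory.congr_hom (hm ⟨x₀, hx₀⟩) (fun _ => c)
    have h2 : (((upCocone k S hconv hup).whisker (incl S)).ι.app ⟨x₀, hx₀⟩ ≫ m)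
        (fun (_ : PLift (x₀ ∈ S)) => c) = m c := by
      show m (if hx : x₀ ∈ S then c else 0) = m c
      rw [dif_pos hx₀]
    show m c = t.ι.app ⟨x₀, hx₀⟩ (fun _ => c)
    exact h2.symm.trans h1

noncomputable def zeroCocone : Cocone (intervalModule k S hconv) where
  pt := ModuleCat.of k PUnit
  ι :=
    { app := fun _ => 0
      naturality := by
        intro x y h
        apply ModuleCat.hom_ext
        apply LinearMap.ext
        intro f
        exact @Subsingleton.elim _ (inferInstanceAs (Subsingleton PUnit.{1})) _ _ }

lemma app_eq_zero
    (hconn : ∀ x ∈ S, ∀ y ∈ S,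
      Relation.ReflTransGen (fun a b => a ∈ S ∧ b ∈ S ∧ (a ≤ b ∨ b ≤ a)) x y)
    (hbad : ¬ (S.Nonempty ∧ (∀ u ∈ S, ∀ r : P, u ≤ r → r ∈ S)))
    (t : Cocone (intervalModule k S hconv)) (x : P) (f : PLift (x ∈ S) → k) :
    t.ι.app x f = 0 := by
  by_cases hx : x ∈ S
  · have hne : S.Nonempty := ⟨x, hx⟩
    have hnup : ¬ (∀ u ∈ S, ∀ r : P, u ≤ r → r ∈ S) := fun hB => hbad ⟨hne, hB⟩
    push_neg at hnup
    obtain ⟨u, hu, r, hur, hr⟩ := hnup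
    rw [src_eq_const k S hx f]
    rw [chain_const k S hconv t (f ⟨hx⟩) (hconn x hx u hu)]
    have hw := t.w (homOfLE hur)
    rw [← hw]
    show t.ι.app r ((intervalModule k S hconv).map (homOfLE hur) (fun _ => f ⟨hx⟩)) = 0
    rw [map_zero_tgt k S hconv _ hr]
    exact map_zero _
  · rw [src_eq_zero k S hx f]
    exact map_zero _

noncomputable def zeroIsColimit
    (hconn : ∀ x ∈ S, ∀ y ∈ S,
      Relation.ReflTransGen (fun a b => a ∈ S ∧ b ∈ S ∧ (a ≤ b ∨ b ≤ a)) x y)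
    (hbad : ¬ (S.Nonempty ∧ (∀ u ∈ S, ∀ r : P, u ≤ r → r ∈ S))) :
    IsColimit (zeroCocone k S hconv) where
  desc _ := 0
  fac := by
    intro t x
    apply ModuleCat.hom_ext
    apply LinearMap.ext
    intro f
    show (0 : ↑t.pt) = t.ι.app x f
    exact (app_eq_zero k S hconv hconn hbad t x f).symm
  uniq := by
    intro t m _
    apply ModuleCat.hom_ext
    apply LinearMap.ext
    intro u
    show m u = 0
    haveI : Subsingleton ((zeroCocone k S hconv).pt : Type) :=
      inferInstanceAs (Subsingleton PUnit.{1})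
    rw [show u = 0 from Subsingleton.elim u 0, map_zero]

end
end IMaux

open CategoryTheory Limits in
/-- Let `S ⊆ P` be a non-empty interval which is an upset of `P`. Then the
colimit of the interval module `𝕀_S` is one-dimensional (isomorphic to `k`)
and the canonical map `colim (𝕀_S|_S) → colim 𝕀_S` is an isomorphism; if `S`
is an interval which is empty or not an upset, then `colim 𝕀_S = 0`. -/
theorem stmt_14 (k : Type) [Field k] {P : Type} [PartialOrder P]
    (S : Set P)
    (hconv : ∀ ⦃x y z : P⦄, x ∈ S → z ∈ S → x ≤ y → y ≤ z → y ∈ S)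
    (hconn : ∀ x ∈ S, ∀ y ∈ S,
      Relation.ReflTransGen (fun a b => a ∈ S ∧ b ∈ S ∧ (a ≤ b ∨ b ≤ a)) x y) :
    (S.Nonempty → (∀ u ∈ S, ∀ r : P, u ≤ r → r ∈ S) →
      Nonempty ((colimit (intervalModule k S hconv) : ModuleCat k) ≃ₗ[k] k) ∧
      IsIso (colimit.pre (intervalModule k S hconv)
        (Monotone.functor (f := (Subtype.val : S → P)) (fun _ _ h => h)))) ∧
    (¬ (S.Nonempty ∧ (∀ u ∈ S, ∀ r : P, u ≤ r → r ∈ S)) →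
      Subsingleton (colimit (intervalModule k S hconv) : ModuleCat k)) := by
  
  constructor
  · intro hne hup
    obtain ⟨x₀, hx₀⟩ := hne
    constructor
    · exact ⟨(colimit.isoColimitCocone
        ⟨_, IMaux.upIsColimit k S hconv hconn x₀ hx₀ hup⟩).toLinearEquiv⟩
    · have heq : colimit.pre (intervalModule k S hconv)
          (Monotone.functor (f := (Subtype.val : S → P)) (fun _ _ h => h)) =
          (colimit.isoColimitCocone
            ⟨_, IMaux.wIsColimit k S hconv hconn x₀ hx₀ hup⟩).hom ≫
          (colimit.isoColimitCocone
            ⟨_, IMaux.upIsColimit k S hconv hconn x₀ hx₀ hup⟩).inv := by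
        apply colimit.hom_ext
        intro s
        rw [colimit.ι_pre, colimit.isoColimitCocone_ι_hom_assoc]
        exact (colimit.isoColimitCocone_ι_inv
          ⟨_, IMaux.upIsColimit k S hconv hconn x₀ hx₀ hup⟩ s.val).symm
      rw [heq]
      infer_instance
  · intro hbad
    haveI : Subsingleton ((IMaux.zeroCocone k S hconv).pt : Type) :=
      inferInstanceAs (Subsingleton PUnit.{1})
    exact ((colimit.isoColimitCocone
      ⟨_, IMaux.zeroIsColimit k S hconv hconn hbad⟩).toLinearEquiv.toEquiv).subsingleton
end

section
/- In a finite product R = R₁ × ⋯ × R_m of totally ordered sets with the product order, any finite aligned subgrid Q = T₁ × ⋯ × T_m (with each T_i ⊆ R_i finite non-empty) is an aligned interior system of its upward closure Q↑ in R. -/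
/-- In a finite product `R = Π i, R i` of totally ordered sets with the product
order, any finite aligned subgrid `Q = Π i, T i` (each `T i ⊆ R i` finite and
non-empty) is an aligned interior system of its upward closure `Q↑`: there is a
floor function on `Q↑`, right adjoint to the inclusion `Q ↪ Q↑`, and for every
`y ∈ Q` the set `{a ∈ Q↑ | ⌊a⌋ ≤ y}` is filtered. -/
theorem stmt_17 {ι : Type*} [Fintype ι] (R : ι → Type*)
    [∀ i, LinearOrder (R i)] (T : ∀ i, Finset (R i)) (hT : ∀ i, (T i).Nonempty) :
    ∃ fl : (∀ i, R i) → (∀ i, R i),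
      ∀ x ∈ {x : ∀ i, R i | ∃ q ∈ {q : ∀ i, R i | ∀ i, q i ∈ T i}, q ≤ x},
        (fl x ∈ {q : ∀ i, R i | ∀ i, q i ∈ T i} ∧ fl x ≤ x ∧
          (∀ q ∈ {q : ∀ i, R i | ∀ i, q i ∈ T i}, q ≤ x → q ≤ fl x)) ∧
        (∀ y ∈ {q : ∀ i, R i | ∀ i, q i ∈ T i},
          ∀ a ∈ {a : ∀ i, R i |
              (∃ q ∈ {q : ∀ i, R i | ∀ i, q i ∈ T i}, q ≤ a) ∧ fl a ≤ y},
          ∀ b ∈ {a : ∀ i, R i |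
              (∃ q ∈ {q : ∀ i, R i | ∀ i, q i ∈ T i}, q ≤ a) ∧ fl a ≤ y},
            ∃ c ∈ {a : ∀ i, R i |
              (∃ q ∈ {q : ∀ i, R i | ∀ i, q i ∈ T i}, q ≤ a) ∧ fl a ≤ y},
              a ≤ c ∧ b ≤ c) := by
  classical
  set fl : (∀ i, R i) → (∀ i, R i) := fun x i =>
    if h : ((T i).filter (· ≤ x i)).Nonempty then ((T i).filter (· ≤ x i)).max' h
    else (hT i).choose with hfl
  -- basic facts when x is above some grid point
  have key : ∀ x : (∀ i, R i), (∃ q ∈ {q : ∀ i, R i | ∀ i, q i ∈ T i}, q ≤ x) →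
      (∀ i, fl x i ∈ T i) ∧ fl x ≤ x ∧
        (∀ q, (∀ i, q i ∈ T i) → q ≤ x → q ≤ fl x) := by
    intro x ⟨q, hq, hqx⟩
    have hne : ∀ i, ((T i).filter (· ≤ x i)).Nonempty := fun i =>
      ⟨q i, Finset.mem_filter.2 ⟨hq i, hqx i⟩⟩
    have hflx : ∀ i, fl x i = ((T i).filter (· ≤ x i)).max' (hne i) := by
      intro i; simp [hfl, hne i]
    refine ⟨fun i => ?_, fun i => ?_, fun q' hq' hq'x i => ?_⟩
    · rw [hflx i]
      exact (Finset.mem_filter.1 (Finset.max'_mem _ (hne i))).1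
    · rw [hflx i]
      exact (Finset.mem_filter.1 (Finset.max'_mem _ (hne i))).2
    · rw [hflx i]
      exact Finset.le_max' ((T i).filter (· ≤ x i)) (q' i) (Finset.mem_filter.2 ⟨hq' i, hq'x i⟩)
  refine ⟨fl, fun x hx => ⟨key x hx, ?_⟩⟩
  intro y hy a ha b hb
  refine ⟨fun i => max (a i) (b i), ⟨⟨ha.1.choose, ha.1.choose_spec.1,
    fun i => le_trans (ha.1.choose_spec.2 i) (le_max_left _ _)⟩, ?_⟩,
    fun i => le_max_left _ _, fun i => le_max_right _ _⟩
  -- fl (a ⊔ b) ≤ y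
  intro i
  set c : ∀ i, R i := fun i => max (a i) (b i) with hc
  have hcQ : ∃ q ∈ {q : ∀ i, R i | ∀ i, q i ∈ T i}, q ≤ c :=
    ⟨ha.1.choose, ha.1.choose_spec.1,
      fun i => le_trans (ha.1.choose_spec.2 i) (le_max_left _ _)⟩
  obtain ⟨hmem, hle, _⟩ := key c hcQ
  -- fl c i ≤ a i or ≤ b i, and fl c i ∈ T i, so fl c i ≤ fl a i or fl b i
  rcases le_max_iff.1 (hle i) with h | h
  · -- fl c i ≤ a i; use that fl a is greatest grid pt ≤ a componentwise
    -- componentwise: fl a i = max' of filter, fl c i ∈ filter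
    have hane : ((T i).filter (· ≤ a i)).Nonempty :=
      ⟨ha.1.choose i, Finset.mem_filter.2 ⟨ha.1.choose_spec.1 i, ha.1.choose_spec.2 i⟩⟩
    have : fl a i = ((T i).filter (· ≤ a i)).max' hane := by simp [hfl, hane]
    calc fl c i ≤ fl a i := by
          rw [this]; exact Finset.le_max' ((T i).filter (· ≤ a i)) (fl c i) (Finset.mem_filter.2 ⟨hmem i, h⟩)
      _ ≤ y i := ha.2 i
  · have hbne : ((T i).filter (· ≤ b i)).Nonempty :=
      ⟨hb.1.choose i, Finset.mem_filter.2 ⟨hb.1.choose_spec.1 i, hb.1.choose_spec.2 i⟩⟩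
    have : fl b i = ((T i).filter (· ≤ b i)).max' hbne := by simp [hfl, hbne]
    calc fl c i ≤ fl b i := by
          rw [this]; exact Finset.le_max' ((T i).filter (· ≤ b i)) (fl c i) (Finset.mem_filter.2 ⟨hmem i, h⟩)
      _ ≤ y i := hb.2 i
end

section
/- Let P be a finite poset and Q an aligned interior system of P. Then for every y ∈ Q the fiber ⌈y⌉_Q = {a ∈ P | ⌊a⌋_Q = y} has a maximum element ν(y), and the map ν : Q → P is an order-embedding onto its image: x ≤ y in Q if and only if ν(x) ≤ ν(y) in P. -/
/-- For a finite poset `P` and an aligned interior system `Q` of `P` (with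
floor function `fl`, satisfying (AL1) and (AL2)), every fiber
`⌈y⌉_Q = {a | fl a = y}` with `y ∈ Q` has a maximum element `ν y`, and
`ν` is an order embedding of `Q` onto its image:
`x ≤ y` iff `ν x ≤ ν y` for `x, y ∈ Q`. -/
theorem stmt_18 {P : Type*} [Fintype P] [PartialOrder P] (Q : Set P)
    (fl : P → P)
    (hmem : ∀ x : P, fl x ∈ Q) (hle : ∀ x : P, fl x ≤ x)
    (hmax : ∀ x : P, ∀ y ∈ Q, y ≤ x → y ≤ fl x)
    (hAL1 : ∀ y ∈ Q, {a : P | fl a ≤ y} = {a : P | ∃ t : P, fl t = y ∧ a ≤ t})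
    (hAL2 : ∀ y ∈ Q, ∀ a ∈ {a : P | fl a = y}, ∀ b ∈ {a : P | fl a = y},
      ∃ c ∈ {a : P | fl a = y}, a ≤ c ∧ b ≤ c) :
    ∃ ν : P → P,
      (∀ y ∈ Q, IsGreatest {a : P | fl a = y} (ν y)) ∧
      (∀ x ∈ Q, ∀ y ∈ Q, (x ≤ y ↔ ν x ≤ ν y)) := by
  classical
  -- each fiber has a greatest element
  have hfix : ∀ y ∈ Q, fl y = y := fun y hy =>
    le_antisymm (hle y) (hmax y y hy le_rfl)
  have hgrt : ∀ y ∈ Q, ∃ m, IsGreatest {a : P | fl a = y} m := by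
    intro y hy
    have hne : ({a : P | fl a = y}).Nonempty := ⟨y, hfix y hy⟩
    obtain ⟨m, hm, hmax'⟩ : ∃ m ∈ {a : P | fl a = y}, ∀ a' ∈ {a : P | fl a = y},
        id m ≤ id a' → id m = id a' := by
      obtain ⟨m, hm, h⟩ := Set.Finite.exists_maximal (Set.toFinite {a : P | fl a = y}) hne
      exact ⟨m, hm, fun a ha hma => le_antisymm hma (h ha hma)⟩
    refine ⟨m, hm, fun a ha => ?_⟩
    obtain ⟨c, hc, hmc, hac⟩ := hAL2 y hy m hm a ha
    have hmc2 : m = c := by simpa using hmax' c hc hmc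
    rw [hmc2]; exact hac
  refine ⟨fun y => if h : y ∈ Q then (hgrt y h).choose else y, ?_, ?_⟩
  · intro y hy; simpa [hy] using (hgrt y hy).choose_spec
  · intro x hx y hy
    simp only [dif_pos hx, dif_pos hy]
    obtain ⟨hxm, hxg⟩ := (hgrt x hx).choose_spec
    obtain ⟨hym, hyg⟩ := (hgrt y hy).choose_spec
    constructor
    · intro hxy
      have hxm' : fl (hgrt x hx).choose = x := hxm
      have h1 : (hgrt x hx).choose ∈ {a : P | fl a ≤ y} := by
        rw [Set.mem_setOf_eq, hxm']; exact hxy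
      rw [hAL1 y hy] at h1
      obtain ⟨t, ht, hlt⟩ := h1
      exact hlt.trans (hyg ht)
    · intro h
      have hx1 : x ≤ (hgrt x hx).choose := by
        have := hxm; rw [Set.mem_setOf_eq] at this
        calc x = fl (hgrt x hx).choose := this.symm
          _ ≤ _ := hle _
      have := hmax (hgrt y hy).choose x hx (hx1.trans h)
      rwa [Set.mem_setOf_eq.mp hym] at this
end
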